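/- Let α > β > 1 and A, B > 0. Then ζ(α)/ζ(β) < ζ(α+1)/ζ(β+1) < 1, and consequently h̄ < h̃ < ĥ, where h̄ = (αAζ(α)/(βBζ(β)))^{1/(α−β)}, h̃ = (αAζ(α+1)/(βBζ(β+1)))^{1/(α−β)} and ĥ = (αA/(βB))^{1/(α−β)}. -/

import Mathlib

/-- The Riemann zeta function for real `x > 1`, `ζ(x) = Σ_{n ≥ 1} n^{−x}`. -/
noncomputable def zetaR (x : ℝ) : ℝ := ∑' n : ℕ, (1 : ℝ) / ((n : ℝ) + 1) ^ x

/-!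
Write `xₙ = 1/(n+1)`. With weights `wₙ = xₙ^β` and the sequences `fₙ = xₙ^(α-β)`, `gₙ = xₙ`,
which decrease together, the four sums `Σ w`, `Σ w f g`, `Σ w f`, `Σ w g` are
`ζ(β)`, `ζ(α+1)`, `ζ(α)`, `ζ(β+1)`. Chebyshev's sum inequality, in the symmetrised form
`2 (Σ w · Σ w f g - Σ w f · Σ w g) = Σ_{i,j} wᵢ wⱼ (fᵢ - fⱼ)(gᵢ - gⱼ) > 0`,
gives `ζ(α) ζ(β+1) < ζ(β) ζ(α+1)`. Since also `ζ(α+1) < ζ(β+1)`, both ratios are below `1`,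
and the ordering of `h̄, h̃, ĥ` follows by monotonicity of `t ↦ (αA/(βB) · t)^(1/(α-β))`.
-/

section Chebyshev

variable {ι ι' : Type*}

theorem hasSum_prod_mul_of_summable {u : ι → ℝ} {v : ι' → ℝ} (hu : Summable u)
    (hv : Summable v) :
    HasSum (fun p : ι × ι' => u p.1 * v p.2) ((∑' i, u i) * ∑' j, v j) := by
  have hu' := summable_norm_iff.2 hu
  have hv' := summable_norm_iff.2 hv
  rw [tsum_mul_tsum_of_summable_norm hu' hv']
  exact (summable_mul_of_summable_norm hu' hv').hasSum

variable {w f g : ι → ℝ}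

theorem hasSum_weighted_sub_mul_sub (hw : Summable w) (hwf : Summable fun i => w i * f i)
    (hwg : Summable fun i => w i * g i) (hwfg : Summable fun i => w i * f i * g i) :
    HasSum (fun p : ι × ι => w p.1 * w p.2 * ((f p.1 - f p.2) * (g p.1 - g p.2)))
      (2 * ((∑' i, w i) * (∑' i, w i * f i * g i) - (∑' i, w i * f i) * ∑' i, w i * g i)) := by
  have h := ((hasSum_prod_mul_of_summable hw hwfg).add (hasSum_prod_mul_of_summable hwfg hw)).sub
    ((hasSum_prod_mul_of_summable hwf hwg).add (hasSum_prod_mul_of_summable hwg hwf))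
  convert h using 1
  exacts [rfl, funext fun p => by ring, by ring]

theorem tsum_mul_tsum_lt_tsum_mul_tsum_of_monovary (hw₀ : ∀ i, 0 ≤ w i) (hfg : Monovary f g)
    {i j : ι} (hwi : 0 < w i) (hwj : 0 < w j) (hf : f i < f j) (hg : g i < g j)
    (hw : Summable w) (hwf : Summable fun i => w i * f i)
    (hwg : Summable fun i => w i * g i) (hwfg : Summable fun i => w i * f i * g i) :
    (∑' i, w i * f i) * (∑' i, w i * g i) < (∑' i, w i) * ∑' i, w i * f i * g i := by
  have hterm_nonneg (p : ι × ι) : 0 ≤ w p.1 * w p.2 * ((f p.1 - f p.2) * (g p.1 - g p.2)) :=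
    mul_nonneg (mul_nonneg (hw₀ _) (hw₀ _)) (hfg.sub_mul_sub_nonneg _ _)
  have hterm_pos : 0 < w i * w j * ((f i - f j) * (g i - g j)) :=
    mul_pos (mul_pos hwi hwj) (mul_pos_of_neg_of_neg (sub_neg.2 hf) (sub_neg.2 hg))
  have := hasSum_lt (i := (i, j)) hterm_nonneg hterm_pos hasSum_zero
    (hasSum_weighted_sub_mul_sub hw hwf hwg hwfg)
  linarith

end Chebyshev

theorem strictAnti_inv_natCast_add_one : StrictAnti fun n : ℕ => ((n : ℝ) + 1)⁻¹ :=
  fun m n h => by dsimp only; gcongr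

theorem summable_inv_natCast_add_one_rpow {s : ℝ} (hs : 1 < s) :
    Summable fun n : ℕ => ((n : ℝ) + 1)⁻¹ ^ s := by
  refine ((summable_nat_add_iff 1).2 (Real.summable_one_div_nat_rpow.2 hs)).congr fun n => ?_
  rw [Real.inv_rpow (by positivity), one_div]
  push_cast
  rfl

theorem zetaR_eq_tsum_inv_rpow (s : ℝ) : zetaR s = ∑' n : ℕ, ((n : ℝ) + 1)⁻¹ ^ s := by
  refine tsum_congr fun n => ?_
  rw [Real.inv_rpow (by positivity), one_div]

theorem zetaR_pos {s : ℝ} (hs : 1 < s) : 0 < zetaR s := by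
  rw [zetaR_eq_tsum_inv_rpow]
  exact (summable_inv_natCast_add_one_rpow hs).tsum_pos (fun n => by positivity) 0 (by positivity)

theorem zetaR_lt_zetaR_of_lt {s t : ℝ} (hs : 1 < s) (hst : s < t) : zetaR t < zetaR s := by
  rw [zetaR_eq_tsum_inv_rpow, zetaR_eq_tsum_inv_rpow]
  have hle (n : ℕ) : ((n : ℝ) + 1)⁻¹ ≤ 1 := inv_le_one_of_one_le₀ (by simp)
  refine Summable.tsum_lt_tsum (i := 1)
    (fun n => Real.rpow_le_rpow_of_exponent_ge (by positivity) (hle n) hst.le) ?_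
    (summable_inv_natCast_add_one_rpow (hs.trans hst)) (summable_inv_natCast_add_one_rpow hs)
  exact Real.rpow_lt_rpow_of_exponent_gt (by positivity) (by norm_num) hst

theorem zetaR_mul_zetaR_add_one_lt {α β : ℝ} (hβ : 1 < β) (hαβ : β < α) :
    zetaR α * zetaR (β + 1) < zetaR β * zetaR (α + 1) := by
  simp only [zetaR_eq_tsum_inv_rpow]
  set x : ℕ → ℝ := fun n => ((n : ℝ) + 1)⁻¹
  have hx (n : ℕ) : 0 < x n := by positivity
  have hx_anti : StrictAnti x := strictAnti_inv_natCast_add_one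
  have hf_anti : Antitone fun n => x n ^ (α - β) := fun m n h =>
    Real.rpow_le_rpow (hx n).le (hx_anti.antitone h) (by linarith)
  have hf : x 1 ^ (α - β) < x 0 ^ (α - β) :=
    Real.rpow_lt_rpow (hx 1).le (hx_anti zero_lt_one) (by linarith)
  have hwf : (fun n => x n ^ β * x n ^ (α - β)) = fun n => x n ^ α := by
    funext n
    rw [← Real.rpow_add (hx n), add_sub_cancel]
  have hwg (s : ℝ) : (fun n => x n ^ s * x n) = fun n => x n ^ (s + 1) := by
    funext n
    rw [Real.rpow_add_one (hx n).ne']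
  have hwfg : (fun n => x n ^ β * x n ^ (α - β) * x n) = fun n => x n ^ (α + 1) := by
    funext n
    rw [← Real.rpow_add (hx n), add_sub_cancel, Real.rpow_add_one (hx n).ne']
  have hsum {s : ℝ} (hs : 1 < s) : Summable fun n => x n ^ s :=
    summable_inv_natCast_add_one_rpow hs
  have key := tsum_mul_tsum_lt_tsum_mul_tsum_of_monovary (w := fun n => x n ^ β) (g := x)
    (fun n => by positivity) (hf_anti.monovary hx_anti.antitone) (by positivity) (by positivity)
    hf (hx_anti zero_lt_one) (hsum hβ) (hwf ▸ hsum (by linarith))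
    (hwg β ▸ hsum (by linarith)) (hwfg ▸ hsum (by linarith))
  simpa only [hwf, hwg, hwfg] using key

/-- For `α > β > 1`: `ζ(α)/ζ(β) < ζ(α+1)/ζ(β+1) < 1`, and consequently
`h̄ < h̃ < ĥ`, where `h̄ = (αAζ(α)/(βBζ(β)))^{1/(α−β)}`,
`h̃ = (αAζ(α+1)/(βBζ(β+1)))^{1/(α−β)}` and `ĥ = (αA/(βB))^{1/(α−β)}`. -/
theorem zeta_ratio_and_h_ordering
    (A B α β : ℝ) (hA : 0 < A) (hB : 0 < B) (hβ : 1 < β) (hαβ : β < α) :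
    (zetaR α / zetaR β < zetaR (α + 1) / zetaR (β + 1) ∧
      zetaR (α + 1) / zetaR (β + 1) < 1) ∧
    (α * A * zetaR α / (β * B * zetaR β)) ^ (1 / (α - β)) <
      (α * A * zetaR (α + 1) / (β * B * zetaR (β + 1))) ^ (1 / (α - β)) ∧
    (α * A * zetaR (α + 1) / (β * B * zetaR (β + 1))) ^ (1 / (α - β)) <
      (α * A / (β * B)) ^ (1 / (α - β)) := by
  have hα : 1 < α := hβ.trans hαβ
  have hζβ := zetaR_pos hβ
  have hζβ₁ := zetaR_pos (by linarith : 1 < β + 1)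
  have hratio : zetaR α / zetaR β < zetaR (α + 1) / zetaR (β + 1) :=
    (div_lt_div_iff₀ hζβ hζβ₁).2 (by linarith [zetaR_mul_zetaR_add_one_lt hβ hαβ])
  have hratio_lt_one : zetaR (α + 1) / zetaR (β + 1) < 1 :=
    (div_lt_one hζβ₁).2 (zetaR_lt_zetaR_of_lt (by linarith) (by linarith))
  have hC : 0 < α * A / (β * B) := by positivity
  have hexp : 0 < 1 / (α - β) := one_div_pos.2 (sub_pos.2 hαβ)
  have hratio_pos : 0 < zetaR α / zetaR β := div_pos (zetaR_pos hα) hζβ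
  have hratio₁_pos : 0 < zetaR (α + 1) / zetaR (β + 1) := div_pos (zetaR_pos (by linarith)) hζβ₁
  refine ⟨⟨hratio, hratio_lt_one⟩, ?_, ?_⟩ <;>
    simp only [mul_div_mul_comm (α * A)]
  · exact Real.rpow_lt_rpow (mul_pos hC hratio_pos).le (mul_lt_mul_of_pos_left hratio hC) hexp
  · exact Real.rpow_lt_rpow (mul_pos hC hratio₁_pos).le
      (mul_lt_of_lt_one_right hC hratio_lt_one) hexp
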